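/- Price stays above production cost: under the standing assumptions ((P(X₀)-c)h > (r+δ)α and existence of t₀ with h∫_{t₀}^T e^{-(r+δ)(s-t₀)}(P(X₀e^{-δs})-c) ds > α), the solution (X,u) of the forward-backward system satisfies P(X(t)) ≥ c for all t ∈ [0,T]. -/

import Mathlib

open Set Real intervalIntegral

def IsForwardSol (δ β r h α c : ℝ) (P : ℝ → ℝ) (T : ℝ) (X u : ℝ → ℝ) : Prop :=
  ∀ t ∈ Set.Icc (0 : ℝ) T,
    HasDerivAt X (-δ * X t + (1 / β) * max (u t - α) 0) t ∧
    HasDerivAt u ((r + δ) * u t - (P (X t) - c) * h) t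

/-!
Suppose `P (X t₁) < c`, and let `a ≤ t₁` be the last time before `t₁` with `c ≤ P (X a)`; then
`X a < X t₁`, and `X ≥ 0` since production is nonnegative.

If the price stays below `c` after `t₁`, then `u' > (r + δ) u` on `(a, T)` together with `u T = 0`
gives `u < 0 < α` on `[a, T)`: nothing is produced, `X` decays, and `X t₁ ≤ X a`.

If it comes back to `c` at a first time `b`, then `X` has an interior maximum `m` on `[a, b]`, where
`X' = 0` forces `u - α = β δ X`. While the price is below `c`, the slack `u - α - β δ X` cannot
become negative, because on its zero set its derivative is `r u + δ α + β δ² X + (c - P X) h > 0`.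
Hence `X' ≥ 0` on `[m, b]`, so `X m ≤ X b < X t₁ ≤ X m`.
-/

section MonotoneOnIcc

variable {f f' : ℝ → ℝ} {a b : ℝ}

theorem monotoneOn_Icc_of_hasDerivAt_nonneg (hf : ∀ x ∈ Icc a b, HasDerivAt f (f' x) x)
    (hf' : ∀ x ∈ Ioo a b, 0 ≤ f' x) : MonotoneOn f (Icc a b) :=
  monotoneOn_of_hasDerivWithinAt_nonneg (convex_Icc a b)
    (fun x hx => (hf x hx).continuousAt.continuousWithinAt)
    (by simpa only [interior_Icc] using fun x hx =>
      (hf x (Ioo_subset_Icc_self hx)).hasDerivWithinAt)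
    (by simpa only [interior_Icc] using hf')

theorem antitoneOn_Icc_of_hasDerivAt_nonpos (hf : ∀ x ∈ Icc a b, HasDerivAt f (f' x) x)
    (hf' : ∀ x ∈ Ioo a b, f' x ≤ 0) : AntitoneOn f (Icc a b) :=
  antitoneOn_of_hasDerivWithinAt_nonpos (convex_Icc a b)
    (fun x hx => (hf x hx).continuousAt.continuousWithinAt)
    (by simpa only [interior_Icc] using fun x hx =>
      (hf x (Ioo_subset_Icc_self hx)).hasDerivWithinAt)
    (by simpa only [interior_Icc] using hf')

theorem strictMonoOn_Icc_of_hasDerivAt_pos (hf : ∀ x ∈ Icc a b, HasDerivAt f (f' x) x)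
    (hf' : ∀ x ∈ Ioo a b, 0 < f' x) : StrictMonoOn f (Icc a b) :=
  strictMonoOn_of_hasDerivWithinAt_pos (convex_Icc a b)
    (fun x hx => (hf x hx).continuousAt.continuousWithinAt)
    (by simpa only [interior_Icc] using fun x hx =>
      (hf x (Ioo_subset_Icc_self hx)).hasDerivWithinAt)
    (by simpa only [interior_Icc] using hf')

end MonotoneOnIcc

theorem HasDerivAt.mul_exp_neg_mul {f : ℝ → ℝ} {ρ g x : ℝ} (hf : HasDerivAt f (ρ * f x + g) x) :
    HasDerivAt (fun t => f t * Real.exp (-ρ * t)) (Real.exp (-ρ * x) * g) x := by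
  have he : HasDerivAt (fun t => Real.exp (-ρ * t)) (Real.exp (-ρ * x) * -ρ) x := by
    simpa using ((hasDerivAt_id x).const_mul (-ρ)).exp
  exact (hf.mul he).congr_deriv (by ring)

theorem exists_last_le_of_continuousOn {g : ℝ → ℝ} {c x y : ℝ} (hxy : x ≤ y)
    (hg : ContinuousOn g (Icc x y)) (hx : c ≤ g x) (hy : g y < c) :
    ∃ a ∈ Ico x y, c ≤ g a ∧ ∀ t ∈ Ioc a y, g t < c := by
  set S := Icc x y ∩ g ⁻¹' Ici c
  have hS : IsClosed S := hg.preimage_isClosed_of_isClosed isClosed_Icc isClosed_Ici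
  have hbdd : BddAbove S := ⟨y, fun t ht => ht.1.2⟩
  obtain ⟨⟨hxa, hay⟩, ha⟩ : sSup S ∈ S := hS.csSup_mem ⟨x, ⟨le_rfl, hxy⟩, hx⟩ hbdd
  refine ⟨sSup S, ⟨hxa, hay.lt_of_ne fun heq => (heq ▸ hy).not_ge ha⟩, ha, fun t ht => ?_⟩
  by_contra! hct
  exact ht.1.not_ge (le_csSup hbdd ⟨⟨hxa.trans ht.1.le, ht.2⟩, hct⟩)

theorem exists_first_le_of_continuousOn {g : ℝ → ℝ} {c x y : ℝ} (hxy : x ≤ y)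
    (hg : ContinuousOn g (Icc x y)) (hx : g x < c) (hy : c ≤ g y) :
    ∃ b ∈ Ioc x y, c ≤ g b ∧ ∀ t ∈ Ico x b, g t < c := by
  set S := Icc x y ∩ g ⁻¹' Ici c
  have hS : IsClosed S := hg.preimage_isClosed_of_isClosed isClosed_Icc isClosed_Ici
  have hbdd : BddBelow S := ⟨x, fun t ht => ht.1.1⟩
  obtain ⟨⟨hxb, hby⟩, hb⟩ : sInf S ∈ S := hS.csInf_mem ⟨y, ⟨hxy, le_rfl⟩, hy⟩ hbdd
  refine ⟨sInf S, ⟨hxb.lt_of_ne fun heq => (heq ▸ hx).not_ge hb, hby⟩, hb, fun t ht => ?_⟩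
  by_contra! hct
  exact ht.2.not_ge (csInf_le hbdd ⟨⟨ht.1, ht.2.le.trans hby⟩, hct⟩)

namespace IsForwardSol

variable {δ β r h α c T : ℝ} {P X u : ℝ → ℝ}

theorem continuousOn_X (hsol : IsForwardSol δ β r h α c P T X u) : ContinuousOn X (Icc 0 T) :=
  fun t ht => (hsol t ht).1.continuousAt.continuousWithinAt

theorem X_nonneg (hβ : 0 < β) (hsol : IsForwardSol δ β r h α c P T X u) (hX0 : 0 ≤ X 0) :
    ∀ t ∈ Icc 0 T, 0 ≤ X t := by
  intro t ht
  have hmono : MonotoneOn (fun t => X t * Real.exp (-(-δ) * t)) (Icc 0 T) :=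
    monotoneOn_Icc_of_hasDerivAt_nonneg (fun x hx => (hsol x hx).1.mul_exp_neg_mul)
      fun x _ => by positivity
  have h0t := hmono ⟨le_rfl, ht.1.trans ht.2⟩ ht ht.1
  simp only [mul_zero, Real.exp_zero, mul_one] at h0t
  exact nonneg_of_mul_nonneg_left (hX0.trans h0t) (Real.exp_pos _)

theorem antitoneOn_X_of_u_le (hδ : 0 ≤ δ) (hsol : IsForwardSol δ β r h α c P T X u)
    (hXnn : ∀ t ∈ Icc 0 T, 0 ≤ X t) {a b : ℝ} (hab : Icc a b ⊆ Icc 0 T)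
    (hu : ∀ t ∈ Ioo a b, u t ≤ α) : AntitoneOn X (Icc a b) :=
  antitoneOn_Icc_of_hasDerivAt_nonpos (fun x hx => (hsol x (hab hx)).1) fun x hx => by
    have hXx := hXnn x (hab (Ioo_subset_Icc_self hx))
    rw [max_eq_right (sub_nonpos.2 (hu x hx))]
    nlinarith

theorem monotoneOn_X_of_le_u_sub (hβ : 0 < β) (hsol : IsForwardSol δ β r h α c P T X u)
    {a b : ℝ} (hab : Icc a b ⊆ Icc 0 T) (hu : ∀ t ∈ Ioo a b, β * δ * X t ≤ u t - α) :
    MonotoneOn X (Icc a b) :=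
  monotoneOn_Icc_of_hasDerivAt_nonneg (fun x hx => (hsol x (hab hx)).1) fun x hx => by
    have hδX : δ * X x ≤ (1 / β) * (u x - α) := by
      rw [one_div, ← div_eq_inv_mul, le_div_iff₀ hβ]
      linarith [hu x hx]
    linarith [mul_le_mul_of_nonneg_left (le_max_left (u x - α) 0) (one_div_pos.2 hβ).le]

theorem u_neg_of_price_lt (hh : 0 < h) (hsol : IsForwardSol δ β r h α c P T X u) (huT : u T = 0)
    {a : ℝ} (ha : 0 ≤ a) (hlt : ∀ t ∈ Ioo a T, P (X t) < c) : ∀ t ∈ Ico a T, u t < 0 := by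
  intro t ht
  have hmono : StrictMonoOn (fun t => u t * Real.exp (-(r + δ) * t)) (Icc a T) := by
    refine strictMonoOn_Icc_of_hasDerivAt_pos
      (fun x hx => HasDerivAt.mul_exp_neg_mul (g := -((P (X x) - c) * h)) ?_) fun x hx => ?_
    · simpa only [← sub_eq_add_neg] using (hsol x ⟨ha.trans hx.1, hx.2⟩).2
    · exact mul_pos (Real.exp_pos _) (by nlinarith [hlt x hx])
  have htT := hmono ⟨ht.1, ht.2.le⟩ ⟨ht.1.trans ht.2.le, le_rfl⟩ ht.2
  simp only [huT, zero_mul] at htT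
  exact neg_of_mul_neg_left htT (Real.exp_pos _).le

theorem le_u_sub_of_price_lt (hr : 0 < r) (hδ : 0 ≤ δ) (hβ : 0 < β) (hα : 0 < α) (hh : 0 < h)
    (hsol : IsForwardSol δ β r h α c P T X u) (hXnn : ∀ t ∈ Icc 0 T, 0 ≤ X t) {s b : ℝ}
    (hsb : Icc s b ⊆ Icc 0 T) (hs : β * δ * X s ≤ u s - α) (hlt : ∀ t ∈ Ico s b, P (X t) < c) :
    ∀ t ∈ Icc s b, β * δ * X t ≤ u t - α := by
  let k t := u t - α - β * δ * X t
  let k' x := (r + δ) * u x - (P (X x) - c) * h - β * δ * (-δ * X x + (1 / β) * max (u x - α) 0)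
  have hk : ∀ x ∈ Icc s b, HasDerivAt k (k' x) x := fun x hx =>
    ((hsol x (hsb hx)).2.sub_const α).sub ((hsol x (hsb hx)).1.const_mul (β * δ))
  have hbound := image_le_of_deriv_right_lt_deriv_boundary' (a := s) (b := b)
    (f := fun _ => 0) (f' := 0) (B := k) (B' := k') continuousOn_const
    (fun x _ => hasDerivWithinAt_const x _ 0) (sub_nonneg.2 hs)
    (fun x hx => (hk x hx).continuousAt.continuousWithinAt)
    (fun x hx => (hk x (Ico_subset_Icc_self hx)).hasDerivWithinAt) fun x hx hx0 => by
      have hxI := hsb (Ico_subset_Icc_self hx)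
      have hslack : u x - α = β * δ * X x := by linarith
      have hβδX : 0 ≤ β * δ * X x := by have := hXnn x hxI; positivity
      simp only [k', Pi.zero_apply]
      rw [max_eq_left (hslack ▸ hβδX), hslack]
      have hprice := hlt x hx
      field_simp
      nlinarith [mul_pos hr hα, mul_nonneg hδ hα.le, mul_nonneg hδ hβδX]
  exact fun t ht => sub_nonneg.1 (hbound ht)

theorem price_ge_of_return (hr : 0 < r) (hδ : 0 < δ) (hβ : 0 < β) (hα : 0 < α) (hh : 0 < h)
    (hPdec : StrictAnti P) (hsol : IsForwardSol δ β r h α c P T X u)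
    (hXnn : ∀ t ∈ Icc 0 T, 0 ≤ X t) {a b t₁ : ℝ} (hab : Icc a b ⊆ Icc 0 T)
    (ha : c ≤ P (X a)) (hb : c ≤ P (X b)) (hlt : ∀ t ∈ Ioo a b, P (X t) < c)
    (ht₁ : t₁ ∈ Icc a b) : c ≤ P (X t₁) := by
  by_contra! ht₁c
  have hXa : X a < X t₁ := hPdec.lt_iff_gt.1 (ht₁c.trans_le ha)
  have hXb : X b < X t₁ := hPdec.lt_iff_gt.1 (ht₁c.trans_le hb)
  obtain ⟨m, hm, hmax⟩ := isCompact_Icc.exists_isMaxOn ⟨t₁, ht₁⟩ (hsol.continuousOn_X.mono hab)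
  have hXm : X t₁ ≤ X m := hmax ht₁
  have hma : a < m := hm.1.lt_of_ne fun heq => by rw [← heq] at hXm; linarith
  have hmb : m < b := hm.2.lt_of_ne fun heq => by rw [heq] at hXm; linarith
  have hderiv : -δ * X m + (1 / β) * max (u m - α) 0 = 0 :=
    (hmax.isLocalMax (Icc_mem_nhds hma hmb)).hasDerivAt_eq_zero (hsol m (hab hm)).1
  have hXm_pos : 0 < X m := (hXnn a (hab ⟨le_rfl, hm.1.trans hm.2⟩)).trans_lt (hXa.trans_le hXm)
  have hslack : β * δ * X m ≤ u m - α := by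
    have hmax_eq : max (u m - α) 0 = β * δ * X m := by
      field_simp at hderiv
      linarith
    have hpos : 0 < β * δ * X m := by positivity
    rcases max_cases (u m - α) 0 with ⟨hcase, -⟩ | ⟨hcase, -⟩ <;> linarith
  have hmono := hsol.monotoneOn_X_of_le_u_sub hβ ((Icc_subset_Icc_left hma.le).trans hab)
    fun t ht => le_u_sub_of_price_lt hr hδ.le hβ hα hh hsol hXnn
      ((Icc_subset_Icc_left hma.le).trans hab) hslack
      (fun t ht => hlt t ⟨hma.trans_le ht.1, ht.2⟩) t (Ioo_subset_Icc_self ht)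
  linarith [hmono ⟨le_rfl, hmb.le⟩ ⟨hmb.le, le_rfl⟩ hmb.le]

theorem price_ge_of_no_return (hδ : 0 ≤ δ) (hα : 0 < α) (hh : 0 < h) (hPdec : StrictAnti P)
    (hsol : IsForwardSol δ β r h α c P T X u) (hXnn : ∀ t ∈ Icc 0 T, 0 ≤ X t) (huT : u T = 0)
    {a t₁ : ℝ} (ha0 : 0 ≤ a) (ha : c ≤ P (X a)) (hlt : ∀ t ∈ Ioo a T, P (X t) < c)
    (ht₁ : t₁ ∈ Icc a T) : c ≤ P (X t₁) := by
  by_contra! ht₁c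
  have hXa : X a < X t₁ := hPdec.lt_iff_gt.1 (ht₁c.trans_le ha)
  have hanti := hsol.antitoneOn_X_of_u_le hδ hXnn (Icc_subset_Icc_left ha0) fun t ht =>
    (hsol.u_neg_of_price_lt hh huT ha0 hlt t (Ioo_subset_Ico_self ht)).le.trans hα.le
  exact hXa.not_ge (hanti ⟨le_rfl, ht₁.1.trans ht₁.2⟩ ht₁ ht₁.1)

end IsForwardSol

theorem stmt_10_general (δ β r h T α c X₀ : ℝ) (hδ : 0 < δ) (hβ : 0 < β) (hr : 0 < r)
    (hh : 0 < h) (hα : 0 < α) (hX₀ : 0 ≤ X₀)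
    (P : ℝ → ℝ) (hP : ∃ L : NNReal, LipschitzWith L P) (hPdec : StrictAnti P)
    (hassum1 : (P X₀ - c) * h > (r + δ) * α)
    (X u : ℝ → ℝ)
    (hsol : IsForwardSol δ β r h α c P T X u)
    (hX0 : X 0 = X₀) (huT : u T = 0) :
    ∀ t ∈ Set.Icc (0 : ℝ) T, c ≤ P (X t) := by
  intro t₁ ht₁
  by_contra! ht₁c
  obtain ⟨L, hL⟩ := hP
  have hXnn := hsol.X_nonneg hβ (hX0 ▸ hX₀)
  have hPX : ContinuousOn (fun t => P (X t)) (Icc 0 T) :=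
    hL.continuous.comp_continuousOn hsol.continuousOn_X
  have hc0 : c ≤ P (X 0) := by
    rw [hX0]
    nlinarith [mul_pos (add_pos hr hδ) hα]
  obtain ⟨a, ⟨ha0, hat₁⟩, ha, hlt_a⟩ := exists_last_le_of_continuousOn ht₁.1
    (hPX.mono (Icc_subset_Icc_right ht₁.2)) hc0 ht₁c
  by_cases hret : ∃ s ∈ Ioc t₁ T, c ≤ P (X s)
  · obtain ⟨s, hs, hcs⟩ := hret
    obtain ⟨b, ⟨ht₁b, hbs⟩, hb, hlt_b⟩ := exists_first_le_of_continuousOn hs.1.le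
      (hPX.mono (Icc_subset_Icc ht₁.1 hs.2)) ht₁c hcs
    have hlt : ∀ t ∈ Ioo a b, P (X t) < c := fun t ht =>
      (le_or_gt t t₁).elim (fun hle => hlt_a t ⟨ht.1, hle⟩) fun hgt => hlt_b t ⟨hgt.le, ht.2⟩
    exact ht₁c.not_ge (hsol.price_ge_of_return hr hδ hβ hα hh hPdec hXnn
      (Icc_subset_Icc ha0 (hbs.trans hs.2)) ha hb hlt ⟨hat₁.le, ht₁b.le⟩)
  · push Not at hret
    have hlt : ∀ t ∈ Ioo a T, P (X t) < c := fun t ht =>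
      (le_or_gt t t₁).elim (fun hle => hlt_a t ⟨ht.1, hle⟩) fun hgt => hret t ⟨hgt, ht.2.le⟩
    exact ht₁c.not_ge (hsol.price_ge_of_no_return hδ.le hα hh hPdec hXnn huT ha0 ha hlt
      ⟨hat₁.le, ht₁.2⟩)

/-- Under the standing assumptions, the price stays above the marginal
production cost along the equilibrium trajectory: `P(X(t)) ≥ c` on `[0,T]`. -/
theorem stmt_10 (δ β r h T α c X₀ : ℝ) (hδ : 0 < δ) (hβ : 0 < β) (hr : 0 < r)
    (hh : 0 < h) (hT : 0 < T) (hα : 0 < α) (hX₀ : 0 ≤ X₀)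
    (P : ℝ → ℝ) (hP : ∃ L : NNReal, LipschitzWith L P) (hPdec : StrictAnti P)
    (hassum1 : (P X₀ - c) * h > (r + δ) * α)
    (hassum2 : ∃ t₀ ∈ Set.Icc (0 : ℝ) T,
      h * ∫ s in t₀..T,
        Real.exp (-(r + δ) * (s - t₀)) * (P (X₀ * Real.exp (-δ * s)) - c) > α)
    (X u : ℝ → ℝ)
    (hsol : IsForwardSol δ β r h α c P T X u)
    (hX0 : X 0 = X₀) (huT : u T = 0) :
    ∀ t ∈ Set.Icc (0 : ℝ) T, c ≤ P (X t) :=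
  stmt_10_general δ β r h T α c X₀ hδ hβ hr hh hα hX₀ P hP hPdec hassum1 X u hsol hX0 huT
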